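/- arXiv:2409.00289 — 5 statements merged into one kernel-verified Lean document; each statement's English description precedes it below -/
import Mathlib

section
/- Strong shift equivalence implies shift equivalence: if square nonnegative integer matrices A and B are connected by a chain of elementary shift equivalences, then A and B are shift equivalent for some lag ℓ ≥ 1. -/
/-- Elementary shift equivalence of square nonnegative-integer matrices
(of possibly different sizes). -/
def ElemShiftEq {m n : ℕ} (A : Matrix (Fin m) (Fin m) ℕ) (B : Matrix (Fin n) (Fin n) ℕ) : Prop :=
  ∃ (R : Matrix (Fin m) (Fin n) ℕ) (S : Matrix (Fin n) (Fin m) ℕ), A = R * S ∧ B = S * R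

/-- Elementary shift equivalence as a relation on the disjoint union of all
square nonnegative-integer matrix sizes. -/
def ElemShiftEq' (X Y : Σ n : ℕ, Matrix (Fin n) (Fin n) ℕ) : Prop :=
  ElemShiftEq X.2 Y.2

/-- Shift equivalence with lag `ℓ`. -/
def ShiftEq {m n : ℕ} (A : Matrix (Fin m) (Fin m) ℕ) (B : Matrix (Fin n) (Fin n) ℕ)
    (ℓ : ℕ) : Prop :=
  ∃ (R : Matrix (Fin m) (Fin n) ℕ) (S : Matrix (Fin n) (Fin m) ℕ),
    A ^ ℓ = R * S ∧ B ^ ℓ = S * R ∧ A * R = R * B ∧ S * A = B * S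

private lemma pow_intertwine {m n : ℕ} {A : Matrix (Fin m) (Fin m) ℕ}
    {B : Matrix (Fin n) (Fin n) ℕ} {R : Matrix (Fin m) (Fin n) ℕ}
    (h : A * R = R * B) (k : ℕ) : A ^ k * R = R * B ^ k := by
  induction k with
  | zero => simp
  | succ k ih =>
    rw [pow_succ, pow_succ, Matrix.mul_assoc, h, ← Matrix.mul_assoc, ih, Matrix.mul_assoc]

private lemma shiftEq_refl {m : ℕ} (A : Matrix (Fin m) (Fin m) ℕ) : ShiftEq A A 1 :=
  ⟨A, 1, by simp [pow_one], by simp [pow_one], rfl, by simp⟩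

private lemma shiftEq_symm {m n : ℕ} {A : Matrix (Fin m) (Fin m) ℕ}
    {B : Matrix (Fin n) (Fin n) ℕ} {ℓ : ℕ} (h : ShiftEq A B ℓ) : ShiftEq B A ℓ := by
  obtain ⟨R, S, h1, h2, h3, h4⟩ := h
  exact ⟨S, R, h2, h1, h4.symm, h3.symm⟩

private lemma shiftEq_trans {m n p : ℕ} {A : Matrix (Fin m) (Fin m) ℕ}
    {B : Matrix (Fin n) (Fin n) ℕ} {C : Matrix (Fin p) (Fin p) ℕ} {ℓ₁ ℓ₂ : ℕ}
    (h : ShiftEq A B ℓ₁) (h' : ShiftEq B C ℓ₂) : ShiftEq A C (ℓ₁ + ℓ₂) := by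
  obtain ⟨R₁, S₁, h1, h2, h3, h4⟩ := h
  obtain ⟨R₂, S₂, h1', h2', h3', h4'⟩ := h'
  refine ⟨R₁ * R₂, S₂ * S₁, ?_, ?_, ?_, ?_⟩
  · calc A ^ (ℓ₁ + ℓ₂) = A ^ ℓ₂ * R₁ * S₁ := by rw [Matrix.mul_assoc, ← h1, ← pow_add, Nat.add_comm]
    _ = R₁ * B ^ ℓ₂ * S₁ := by rw [pow_intertwine h3]
    _ = R₁ * R₂ * (S₂ * S₁) := by rw [h1']; simp only [Matrix.mul_assoc]
  · calc C ^ (ℓ₁ + ℓ₂) = C ^ ℓ₁ * S₂ * R₂ := by rw [Matrix.mul_assoc, ← h2', ← pow_add, Nat.add_comm]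
    _ = S₂ * B ^ ℓ₁ * R₂ := by rw [← pow_intertwine h4'.symm ℓ₁]
    _ = S₂ * S₁ * (R₁ * R₂) := by rw [h2]; simp only [Matrix.mul_assoc]
  · rw [← Matrix.mul_assoc, h3, Matrix.mul_assoc, h3', ← Matrix.mul_assoc]
  · rw [Matrix.mul_assoc, h4, ← Matrix.mul_assoc, h4', Matrix.mul_assoc]

/-- Strong shift equivalence (the equivalence relation generated by elementary
shift equivalence) implies shift equivalence for some lag `ℓ ≥ 1`. -/
theorem stmt_3 (X Y : Σ n : ℕ, Matrix (Fin n) (Fin n) ℕ)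
    (h : Relation.EqvGen ElemShiftEq' X Y) :
    ∃ ℓ : ℕ, 1 ≤ ℓ ∧ ShiftEq X.2 Y.2 ℓ := by
  induction h with
  | rel x y hxy =>
    obtain ⟨R, S, h1, h2⟩ := hxy
    exact ⟨1, le_refl 1, R, S, by simpa using h1, by simpa using h2,
      by rw [h1, h2, Matrix.mul_assoc], by rw [h1, h2, Matrix.mul_assoc]⟩
  | refl x => exact ⟨1, le_refl 1, shiftEq_refl _⟩
  | symm x y _ ih =>
    obtain ⟨ℓ, hℓ, h'⟩ := ih
    exact ⟨ℓ, hℓ, shiftEq_symm h'⟩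
  | trans x y z _ _ ih₁ ih₂ =>
    obtain ⟨ℓ₁, hℓ₁, h₁⟩ := ih₁
    obtain ⟨ℓ₂, hℓ₂, h₂⟩ := ih₂
    exact ⟨ℓ₁ + ℓ₂, le_trans hℓ₁ (Nat.le_add_right _ _), shiftEq_trans h₁ h₂⟩
end

section
/- Elementary shift equivalence of matrices is a symmetric and reflexive relation on square nonnegative integer matrices, but it is not transitive. -/
/-- Elementary shift equivalence is reflexive and symmetric, but not transitive. -/
theorem stmt_4 :
    (∀ (m : ℕ) (A : Matrix (Fin m) (Fin m) ℕ), ElemShiftEq A A) ∧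
    (∀ (m n : ℕ) (A : Matrix (Fin m) (Fin m) ℕ) (B : Matrix (Fin n) (Fin n) ℕ),
      ElemShiftEq A B → ElemShiftEq B A) ∧
    ¬ (∀ (m n p : ℕ) (A : Matrix (Fin m) (Fin m) ℕ) (B : Matrix (Fin n) (Fin n) ℕ)
        (C : Matrix (Fin p) (Fin p) ℕ),
        ElemShiftEq A B → ElemShiftEq B C → ElemShiftEq A C) := by
  refine ⟨fun m A => ⟨A, 1, by simp, by simp⟩,
    fun m n A B ⟨R, S, h1, h2⟩ => ⟨S, R, h2, h1⟩, fun h => ?_⟩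
  have hAB : ElemShiftEq (!![0,1;0,0] : Matrix (Fin 2) (Fin 2) ℕ)
      (!![0] : Matrix (Fin 1) (Fin 1) ℕ) := by
    refine ⟨!![1;0], !![0,1], ?_, ?_⟩ <;> decide
  have hBC : ElemShiftEq (!![0] : Matrix (Fin 1) (Fin 1) ℕ)
      (0 : Matrix (Fin 0) (Fin 0) ℕ) := by
    refine ⟨0, 0, ?_, ?_⟩ <;> decide
  obtain ⟨R, S, h1, h2⟩ := h 2 1 0 _ _ _ hAB hBC
  have := congrFun (congrFun h1 0) 1
  simp [Matrix.mul_apply] at this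
end

section
/- Let z ∈ ℝ³ be the column vector whose entries are the real numbers z₁ = (1 - 5·(2/(11+3√69))^{1/3} + ((11+3√69)/2)^{1/3})/3, z₂ = (-1 + ((25-3√69)/2)^{1/3} + ((25+3√69)/2)^{1/3})/3, z₃ = 1. Then the set T = { u ∈ ℤ³ : u·z ≥ 0 } is a submonoid of ℤ³, and the map (a,b,c) ↦ (a+c, a+b+c, b+c) maps T bijectively onto T. -/
private lemma cube_rpow {x : ℝ} (hx : 0 ≤ x) : (x ^ ((1:ℝ)/3)) ^ 3 = x := by
  rw [← Real.rpow_natCast (x ^ ((1:ℝ)/3)) 3, ← Real.rpow_mul hx]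
  norm_num

set_option maxHeartbeats 1600000 in
/-- With `z` the indicated Perron eigenvector, the set
`T = {u ∈ ℤ³ : u ⬝ z ≥ 0}` is a submonoid of `ℤ³`, and the map
`(a,b,c) ↦ (a+c, a+b+c, b+c)` maps `T` bijectively onto `T`. -/
theorem stmt_14 :
    let z₁ : ℝ := (1 - 5 * (2 / (11 + 3 * Real.sqrt 69)) ^ ((1 : ℝ) / 3)
      + ((11 + 3 * Real.sqrt 69) / 2) ^ ((1 : ℝ) / 3)) / 3
    let z₂ : ℝ := (-1 + ((25 - 3 * Real.sqrt 69) / 2) ^ ((1 : ℝ) / 3)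
      + ((25 + 3 * Real.sqrt 69) / 2) ^ ((1 : ℝ) / 3)) / 3
    let z₃ : ℝ := 1
    let T : Set (ℤ × ℤ × ℤ) :=
      {u | 0 ≤ (u.1 : ℝ) * z₁ + (u.2.1 : ℝ) * z₂ + (u.2.2 : ℝ) * z₃}
    let f : ℤ × ℤ × ℤ → ℤ × ℤ × ℤ :=
      fun u => (u.1 + u.2.2, u.1 + u.2.1 + u.2.2, u.2.1 + u.2.2)
    ((0, 0, 0) ∈ T) ∧
    (∀ a b, a ∈ T → b ∈ T → a + b ∈ T) ∧
    Set.BijOn f T T := by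
  intro z₁ z₂ z₃ T f
  have e1 : z₁ = (1 - 5 * (2 / (11 + 3 * Real.sqrt 69)) ^ ((1 : ℝ) / 3)
      + ((11 + 3 * Real.sqrt 69) / 2) ^ ((1 : ℝ) / 3)) / 3 := rfl
  have e2 : z₂ = (-1 + ((25 - 3 * Real.sqrt 69) / 2) ^ ((1 : ℝ) / 3)
      + ((25 + 3 * Real.sqrt 69) / 2) ^ ((1 : ℝ) / 3)) / 3 := rfl
  have e3 : z₃ = 1 := rfl
  have hT : ∀ u : ℤ × ℤ × ℤ, u ∈ T ↔
      0 ≤ (u.1 : ℝ) * z₁ + (u.2.1 : ℝ) * z₂ + (u.2.2 : ℝ) * z₃ := fun u => Iff.rfl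
  have hf : ∀ u : ℤ × ℤ × ℤ, f u = (u.1 + u.2.2, u.1 + u.2.1 + u.2.2, u.2.1 + u.2.2) :=
    fun u => rfl
  clear_value f T z₃ z₂ z₁
  have hs0 : (0:ℝ) ≤ Real.sqrt 69 := Real.sqrt_nonneg 69
  have hs : (Real.sqrt 69) ^ 2 = 69 := Real.sq_sqrt (by norm_num)
  set s : ℝ := Real.sqrt 69 with hsdef
  have h25 : (0:ℝ) ≤ (25 - 3*s)/2 := by nlinarith
  have h25' : (0:ℝ) ≤ (25 + 3*s)/2 := by nlinarith
  have h11 : (0:ℝ) < 11 + 3*s := by nlinarith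
  -- cubic for z₂
  have h2 : z₂^3 + z₂^2 = 1 := by
    have ha3 : (((25 + 3*s)/2) ^ ((1:ℝ)/3))^3 = (25 + 3*s)/2 := cube_rpow h25'
    have hb3 : (((25 - 3*s)/2) ^ ((1:ℝ)/3))^3 = (25 - 3*s)/2 := cube_rpow h25
    have hab : ((25 + 3*s)/2) ^ ((1:ℝ)/3) * ((25 - 3*s)/2) ^ ((1:ℝ)/3) = 1 := by
      rw [← Real.mul_rpow h25' h25]
      have : ((25 + 3*s)/2) * ((25 - 3*s)/2) = 1 := by linear_combination (-9/4) * hs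
      rw [this, Real.one_rpow]
    set a : ℝ := ((25 + 3*s)/2) ^ ((1:ℝ)/3)
    set b : ℝ := ((25 - 3*s)/2) ^ ((1:ℝ)/3)
    have e2' : z₂ = (-1 + b + a)/3 := by rw [e2]
    rw [e2']
    linear_combination (ha3 + hb3)/27 + ((a+b)/9) * hab
  -- cubic for z₁
  have h1c : z₁^3 - z₁^2 + 2*z₁ - 1 = 0 := by
    have hd3 : (((11 + 3*s)/2) ^ ((1:ℝ)/3))^3 = (11 + 3*s)/2 := cube_rpow (by linarith)
    have hc3 : ((2/(11 + 3*s)) ^ ((1:ℝ)/3))^3 = 2/(11 + 3*s) :=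
      cube_rpow (by positivity)
    have hcd : (2/(11 + 3*s)) ^ ((1:ℝ)/3) * ((11 + 3*s)/2) ^ ((1:ℝ)/3) = 1 := by
      rw [← Real.mul_rpow (by positivity) (by linarith)]
      have : (2/(11 + 3*s)) * ((11 + 3*s)/2) = 1 := by field_simp
      rw [this, Real.one_rpow]
    set c : ℝ := (2/(11 + 3*s)) ^ ((1:ℝ)/3)
    set d : ℝ := ((11 + 3*s)/2) ^ ((1:ℝ)/3)
    have hc3' : c^3 * (11 + 3*s) = 2 := by
      rw [hc3]; field_simp
    have hc125 : 125 * c^3 = (3*s - 11)/2 := by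
      have key : (125*c^3 - (3*s-11)/2) * (11 + 3*s) = 0 := by
        linear_combination 125*hc3' - (9/2)*hs
      rcases mul_eq_zero.mp key with h | h
      · linarith
      · linarith
    have e1' : z₁ = (1 - 5*c + d)/3 := by rw [e1]
    rw [e1']
    linear_combination hd3/27 - hc125/27 - (5*(d-5*c)/9)*hcd
  -- positivity of z₂
  have hpos : 0 < z₂ := by
    by_contra h
    push_neg at h
    nlinarith [mul_nonneg (sq_nonneg (z₂+2/3)) (by linarith : (0:ℝ) ≤ 1/3 - z₂)]
  -- z₁ = z₂²
  have h1 : z₁ = z₂^2 := by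
    have hq : (z₂^2)^3 - (z₂^2)^2 + 2*(z₂^2) - 1 = 0 := by
      linear_combination (z₂^3 - z₂^2 + 1) * h2
    have key : (z₁ - z₂^2) * (z₁^2 + z₁*z₂^2 + z₂^4 - z₁ - z₂^2 + 2) = 0 := by
      linear_combination h1c - hq
    rcases mul_eq_zero.mp key with h | h
    · linarith [sub_eq_zero.mp h]
    · nlinarith [sq_nonneg (z₁+z₂^2), sq_nonneg (z₁-1), sq_nonneg (z₂^2-1)]
  refine ⟨?_, ?_, ?_, ?_, ?_⟩
  · rw [hT]
    norm_num
  · intro u v hu hv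
    rw [hT] at hu hv ⊢
    simp only [Prod.fst_add, Prod.snd_add]
    push_cast
    nlinarith [hu, hv]
  · -- MapsTo
    intro u hu
    rw [hT] at hu
    rw [e3] at hu
    rw [hf u, hT, e3]
    show (0:ℝ) ≤ ((u.1 + u.2.2 : ℤ):ℝ) * z₁ + ((u.1 + u.2.1 + u.2.2 : ℤ):ℝ) * z₂
        + ((u.2.1 + u.2.2 : ℤ):ℝ) * 1
    push_cast
    have hid : z₂ * (((u.1:ℝ) + (u.2.2:ℝ)) * z₁ + ((u.1:ℝ) + (u.2.1:ℝ) + (u.2.2:ℝ)) * z₂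
        + ((u.2.1:ℝ) + (u.2.2:ℝ)) * 1)
        = (1 + z₂) * ((u.1:ℝ) * z₁ + (u.2.1:ℝ) * z₂ + (u.2.2:ℝ) * 1) := by
      linear_combination ((u.2.2:ℝ) * z₂ - (u.1:ℝ)) * h1 + (u.2.2:ℝ) * h2
    nlinarith [hid, hu, hpos, mul_nonneg (by linarith : (0:ℝ) ≤ 1 + z₂) hu]
  · -- InjOn
    intro u _ v _ h
    rw [hf u, hf v] at h
    obtain ⟨a, b, c⟩ := u
    obtain ⟨x, y, w⟩ := v
    simp only [Prod.mk.injEq] at h ⊢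
    omega
  · -- SurjOn
    intro v hv
    obtain ⟨x, y, w⟩ := v
    rw [hT] at hv
    rw [e3] at hv
    have hv' : (0:ℝ) ≤ (x:ℝ) * z₁ + (y:ℝ) * z₂ + (w:ℝ) * 1 := hv
    refine ⟨(y - w, y - x, x - y + w), ?_, ?_⟩
    · rw [hT, e3]
      show (0:ℝ) ≤ ((y - w : ℤ):ℝ) * z₁ + ((y - x : ℤ):ℝ) * z₂ + ((x - y + w : ℤ):ℝ) * 1
      push_cast
      have hid : (1 + z₂) * (((y:ℝ) - (w:ℝ)) * z₁ + ((y:ℝ) - (x:ℝ)) * z₂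
          + ((x:ℝ) - (y:ℝ) + (w:ℝ)) * 1)
          = z₂ * ((x:ℝ) * z₁ + (y:ℝ) * z₂ + (w:ℝ) * 1) := by
        linear_combination ((x:ℝ) * (-z₂) + (y:ℝ) * (1+z₂) - (w:ℝ) * (1+z₂)) * h1
          + (-(x:ℝ) + (y:ℝ) - (w:ℝ)) * h2
      nlinarith [hid, hv', hpos, mul_nonneg (le_of_lt hpos) hv']
    · rw [hf]
      simp only [Prod.mk.injEq]
      refine ⟨by omega, by omega, by omega⟩
end

section
/- In a finite sandpile graph, the order of firings does not matter: if a configuration c can be stabilized, then any two maximal sequences of legal firings starting from c terminate in the same stable configuration (abelian property / local confluence of the firing relation implies global confluence). -/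
/-- Out-degree of a vertex: total number of outgoing edges (including those to the sink). -/
def outdeg {V : Type} [Fintype V] (E : V → V → ℕ) (w : V) : ℕ := ∑ u, E w u

/-- A legal firing of the sandpile graph with edge multiplicities `E` and sink `s`:
an unstable non-sink vertex `w` (holding at least `outdeg w` chips) loses `outdeg w`
chips and sends one chip along each outgoing edge; chips reaching the sink vanish. -/
def Fires {V : Type} [Fintype V] [DecidableEq V] (E : V → V → ℕ) (s : V)
    (c c' : V → ℕ) : Prop :=
  ∃ w : V, w ≠ s ∧ outdeg E w ≤ c w ∧
    c' = fun u => if u = s then 0 else c u + E w u - (if u = w then outdeg E w else 0)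

/-- A configuration is stable if every non-sink vertex holds fewer chips than its
out-degree. -/
def Stable {V : Type} [Fintype V] (E : V → V → ℕ) (s : V) (c : V → ℕ) : Prop :=
  ∀ w : V, w ≠ s → c w < outdeg E w

/-- A stable configuration admits no legal firing. -/
lemma stable_no_fire {V : Type} [Fintype V] [DecidableEq V] (E : V → V → ℕ) (s : V)
    {c c' : V → ℕ} (hs : Stable E s c) : ¬ Fires E s c c' := by
  rintro ⟨w, hw, hle, -⟩
  exact absurd hle (not_le.mpr (hs w hw))

/-- From a stable configuration, any sequence of firings is empty. -/
lemma stable_rtg {V : Type} [Fintype V] [DecidableEq V] (E : V → V → ℕ) (s : V)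
    {c d : V → ℕ} (hs : Stable E s c) (h : Relation.ReflTransGen (Fires E s) c d) :
    c = d := by
  rcases Relation.ReflTransGen.cases_head h with rfl | ⟨e, he, -⟩
  · rfl
  · exact absurd he (stable_no_fire E s hs)

/-- Strong confluence (diamond property) of the firing relation. -/
lemma fires_diamond {V : Type} [Fintype V] [DecidableEq V] (E : V → V → ℕ) (s : V)
    (a b c : V → ℕ) (hab : Fires E s a b) (hac : Fires E s a c) :
    ∃ d, Relation.ReflGen (Fires E s) b d ∧ Relation.ReflTransGen (Fires E s) c d := by
  obtain ⟨w, hw, hwle, rfl⟩ := hab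
  obtain ⟨v, hv, hvle, rfl⟩ := hac
  by_cases hwv : w = v
  · subst hwv
    exact ⟨_, Relation.ReflGen.refl, Relation.ReflTransGen.refl⟩
  · refine ⟨fun u => if u = s then 0 else
      a u + E w u + E v u - (if u = w then outdeg E w else 0)
        - (if u = v then outdeg E v else 0), ?_, ?_⟩
    · refine Relation.ReflGen.single ⟨v, hv, ?_, ?_⟩
      · simp only [if_neg hv, if_neg (Ne.symm hwv)]
        omega
      · funext u
        by_cases hus : u = s
        · simp [hus]
        · simp only [if_neg hus]
          by_cases huw : u = w <;> by_cases huv : u = v <;>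
            simp_all <;> omega
    · refine Relation.ReflTransGen.single ⟨w, hw, ?_, ?_⟩
      · simp only [if_neg hw, if_neg hwv]
        omega
      · funext u
        by_cases hus : u = s
        · simp [hus]
        · simp only [if_neg hus]
          by_cases huw : u = w <;> by_cases huv : u = v <;>
            simp_all <;> omega

/-- The abelian property: on a finite sandpile graph (every vertex has a directed
path to the sink `s`), any two maximal sequences of legal firings from a
configuration `c` terminate in the same stable configuration. -/
theorem stmt_16 {V : Type} [Fintype V] [DecidableEq V] (E : V → V → ℕ) (s : V)
    (hsink : ∀ w : V, w ≠ s → Relation.ReflTransGen (fun a b => 0 < E a b) w s)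
    (c c₁ c₂ : V → ℕ)
    (h₁ : Relation.ReflTransGen (Fires E s) c c₁) (hs₁ : Stable E s c₁)
    (h₂ : Relation.ReflTransGen (Fires E s) c c₂) (hs₂ : Stable E s c₂) :
    c₁ = c₂ := by
  obtain ⟨d, hd₁, hd₂⟩ := Relation.church_rosser (fires_diamond E s) h₁ h₂
  rw [stable_rtg E s hs₁ hd₁, stable_rtg E s hs₂ hd₂]
end

section
/- Every configuration on a finite sandpile graph stabilizes: there is no infinite sequence of legal firings starting from any configuration. -/
open Finset in
/-- Firing vertex `w` decreases the total number of chips by at least `E w s`. -/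
lemma fire_sum {V : Type} [Fintype V] [DecidableEq V] (E : V → V → ℕ) (s : V)
    (c : V → ℕ) (w : V) (hw : w ≠ s) (hle : outdeg E w ≤ c w) :
    (∑ u, ((fun u => if u = s then 0 else c u + E w u - (if u = w then outdeg E w else 0)) u))
      + E w s ≤ ∑ u, c u := by
  classical
  have hs : s ∈ (univ : Finset V) := mem_univ s
  have hwmem : w ∈ (univ : Finset V).erase s := by simp [hw]
  have h1 : ∀ (h : V → ℕ), ∑ u, h u = h s + ∑ u ∈ univ.erase s, h u := by
    intro h; exact (Finset.add_sum_erase _ h hs).symm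
  have h2 : ∀ (h : V → ℕ), ∑ u ∈ univ.erase s, h u = h w + ∑ u ∈ (univ.erase s).erase w, h u := by
    intro h; exact (Finset.add_sum_erase _ h hwmem).symm
  set S := (univ.erase s).erase w with hS
  have hws : ∀ u ∈ S, u ≠ s ∧ u ≠ w := by
    intro u hu; simp [hS] at hu; tauto
  have lhs1 : ∑ u, ((fun u => if u = s then 0 else c u + E w u - (if u = w then outdeg E w else 0)) u)
      = (c w + E w w - outdeg E w) + ∑ u ∈ S, (c u + E w u) := by
    rw [h1, h2]
    simp only [if_pos rfl, if_neg hw, zero_add, if_true]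
    congr 1
    apply Finset.sum_congr rfl
    intro u hu
    obtain ⟨h1', h2'⟩ := hws u hu
    simp [h1', h2']
  have hdeg : outdeg E w = E w s + (E w w + ∑ u ∈ S, E w u) := by
    rw [outdeg, h1, h2]
  have rhs1 : ∑ u, c u = c s + (c w + ∑ u ∈ S, c u) := by rw [h1, h2]
  rw [lhs1, rhs1, Finset.sum_add_distrib]
  omega

/-- On a finite sandpile graph (every non-sink vertex has a directed path to the
sink `s`), every configuration stabilizes: there is no infinite sequence of
legal firings. -/
theorem stmt_17 {V : Type} [Fintype V] [DecidableEq V] (E : V → V → ℕ) (s : V)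
    (hsink : ∀ w : V, w ≠ s → Relation.ReflTransGen (fun a b => 0 < E a b) w s)
    (c : V → ℕ) :
    ¬ ∃ f : ℕ → (V → ℕ), f 0 = c ∧ ∀ k : ℕ, Fires E s (f k) (f (k + 1)) := by
  classical
  rintro ⟨f, hf0, hfire⟩
  choose g hgs hgle hgf using hfire
  set T : ℕ → ℕ := fun k => ∑ u, f k u with hT
  -- total chips decrease by at least E (g k) s at each step
  have hstep : ∀ k, T (k + 1) + E (g k) s ≤ T k := by
    intro k
    have h := fire_sum E s (f k) (g k) (hgs k) (hgle k)
    rw [← hgf k] at h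
    exact h
  have hmono : ∀ k m, k ≤ m → T m ≤ T k := by
    intro k m h
    induction m, h using Nat.le_induction with
    | base => exact le_rfl
    | succ n hn ih => exact le_trans (le_trans (Nat.le_add_right _ _) (hstep n)) ih
  have hbound : ∀ k v, f k v ≤ T 0 := by
    intro k v
    exact le_trans
      (Finset.single_le_sum (fun u _ => Nat.zero_le (f k u)) (Finset.mem_univ v))
      (hmono 0 k (Nat.zero_le k))
  -- a vertex not firing at step k (and not the sink) does not lose chips
  have hgain : ∀ v, v ≠ s → ∀ k, g k ≠ v → f (k + 1) v = f k v + E (g k) v := by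
    intro v hv k hk
    rw [hgf k]
    simp only [if_neg hv, if_neg (fun h : v = g k => hk h.symm)]
    omega
  -- "fires infinitely often"
  set Inf : V → Prop := fun w => ∀ N, ∃ k, N ≤ k ∧ g k = w with hInf
  -- pigeonhole: some vertex fires infinitely often
  have hexInf : ∃ w, Inf w := by
    by_contra h
    simp only [hInf] at h
    push_neg at h
    choose N hN using h
    set M := Finset.univ.sup N with hM
    exact hN (g M) M (Finset.le_sup (Finset.mem_univ _)) rfl
  -- propagation along edges
  have hprop : ∀ w v, Inf w → 0 < E w v → v ≠ s → Inf v := by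
    intro w v hw hE hv
    by_cases hvw : v = w
    · exact hvw ▸ hw
    by_contra hnv
    simp only [hInf] at hnv
    push_neg at hnv
    obtain ⟨N, hN⟩ := hnv
    have mono2 : ∀ k m, N ≤ k → k ≤ m → f k v ≤ f m v := by
      intro k m hk hkm
      induction m, hkm using Nat.le_induction with
      | base => exact le_rfl
      | succ n hn ih =>
        refine le_trans ih ?_
        rw [hgain v hv n (hN n (le_trans hk hn))]
        exact Nat.le_add_right _ _
    have growth : ∀ n : ℕ, ∃ k, N ≤ k ∧ f N v + n ≤ f k v := by
      intro n
      induction n with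
      | zero => exact ⟨N, le_rfl, by omega⟩
      | succ n ih =>
        obtain ⟨k, hk, hkv⟩ := ih
        obtain ⟨m, hm, hgm⟩ := hw k
        have hmv : g m ≠ v := hN m (le_trans hk hm)
        have h1 : f (m + 1) v = f m v + E w v := by
          rw [hgain v hv m hmv, hgm]
        have h2 : f k v ≤ f m v := mono2 k m hk hm
        exact ⟨m + 1, le_trans hk (le_trans hm (Nat.le_succ m)), by omega⟩
    obtain ⟨k, hk, hkv⟩ := growth (T 0 + 1)
    have hb := hbound k v
    omega
  -- some vertex with an edge to the sink fires infinitely often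
  have key : ∀ w, Relation.ReflTransGen (fun a b => 0 < E a b) w s →
      Inf w → ∃ v, Inf v ∧ 0 < E v s := by
    intro w hpath
    induction hpath using Relation.ReflTransGen.head_induction_on with
    | refl =>
      intro hs'
      obtain ⟨k, _, hk⟩ := hs' 0
      exact absurd hk (hgs k)
    | @head a b hab hbs ih =>
      intro ha
      by_cases hbsq : b = s
      · exact ⟨a, ha, hbsq ▸ hab⟩
      · exact ih (hprop a b ha hab hbsq)
  have hsinkfire : ∃ v, Inf v ∧ 0 < E v s := by
    obtain ⟨w, hw⟩ := hexInf
    have hwns : w ≠ s := by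
      obtain ⟨k, _, hk⟩ := hw 0
      exact hk ▸ hgs k
    exact key w (hsink w hwns) hw
  obtain ⟨v, hv, hEv⟩ := hsinkfire
  -- total chips drop by at least 1 infinitely often: contradiction
  have count : ∀ n : ℕ, ∃ k, T k + n ≤ T 0 := by
    intro n
    induction n with
    | zero => exact ⟨0, by omega⟩
    | succ n ih =>
      obtain ⟨k, hk⟩ := ih
      obtain ⟨m, hm, hgm⟩ := hv k
      have h1 := hstep m
      rw [hgm] at h1
      have h2 := hmono k m hm
      exact ⟨m + 1, by omega⟩
  obtain ⟨k, hk⟩ := count (T 0 + 1)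
  omega
end
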